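/- If u = (u_t) is a strongly continuous one-parameter group of ternary automorphisms of a Hilbert B-module E with generator δ, then for all x, y, z ∈ dom(δ), the element x⟨y,z⟩ lies in dom(δ) and δ(x⟨y,z⟩) = δ(x)⟨y,z⟩ + x⟨δ(y),z⟩ + x⟨y,δ(z)⟩; i.e., δ is a ternary derivation. -/

import Mathlib

open scoped RightActions
open Filter Topology

/-- The December 2024 Mathlib `CStarModule`: a right `A`-module (`SMul Aᵐᵒᵖ E`) whose inner
product satisfies `⟪x, y <• a⟫ = ⟪x, y⟫ * a`. Current Mathlib's `CStarModule` uses left modules. -/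
class CStarModuleRight (A E : Type*) [NonUnitalSemiring A] [StarRing A] [Module ℂ A]
    [AddCommGroup E] [Module ℂ E] [PartialOrder A] [SMul Aᵐᵒᵖ E] [Norm A] [Norm E]
    extends Inner A E where
  inner_add_right {x} {y} {z} : inner x (y + z) = inner x y + inner x z
  inner_self_nonneg {x} : 0 ≤ inner x x
  inner_self {x} : inner x x = 0 ↔ x = 0
  inner_op_smul_right {a : A} {x y : E} : inner x (y <• a) = inner x y * a
  inner_smul_right_complex {z : ℂ} {x} {y} : inner x (z • y) = z • inner x y
  star_inner x y : star (inner x y) = inner y x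
  norm_eq_sqrt_norm_inner_self x : ‖x‖ = √‖inner x x‖

/-!
For `x ∈ D`, since `u 0 = id` the difference quotient defining `δ x` is the slope of the orbit
`t ↦ u t x` at `0`, so `x ∈ D` says exactly that the orbit is differentiable at `0` with
derivative `δ x`. By the Cauchy–Schwarz inequality `‖⟪y, z⟫‖ ≤ ‖y‖ ‖z‖` the ternary product
`x⟪y, z⟫` is a bounded real-trilinear map, so the Leibniz rule differentiates the orbit
`u t (x⟪y, z⟫) = (u t x)⟪u t y, u t z⟫` at `0`.
-/

namespace CStarModuleRight

variable {B E : Type*}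
    [NonUnitalCStarAlgebra B] [PartialOrder B]
    [NormedAddCommGroup E] [NormedSpace ℂ E] [SMul Bᵐᵒᵖ E] [CStarModuleRight B E]

lemma inner_sub_right {x y z : E} : inner B x (y - z) = inner B x y - inner B x z :=
  (AddMonoidHom.mk' (fun y : E => inner B x y) fun _ _ => inner_add_right).map_sub y z

lemma inner_add_left {x y z : E} : inner B (x + y) z = inner B x z + inner B y z := by
  rw [← star_inner z, inner_add_right, star_add, star_inner, star_inner]

lemma inner_sub_left {x y z : E} : inner B (x - y) z = inner B x z - inner B y z :=
  (AddMonoidHom.mk' (fun x : E => inner B x z) fun _ _ => inner_add_left).map_sub x y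

lemma inner_real_smul_right {r : ℝ} {x y : E} : inner B x (r • y) = r • inner B x y := by
  rw [RCLike.real_smul_eq_coe_smul (K := ℂ) r y, inner_smul_right_complex,
    RCLike.real_smul_eq_coe_smul (K := ℂ) r (inner B x y)]

lemma inner_real_smul_left {r : ℝ} {x y : E} : inner B (r • x) y = r • inner B x y := by
  rw [← star_inner y, inner_real_smul_right, star_smul, star_trivial, star_inner]

lemma inner_op_smul_left {a : B} {x y : E} : inner B (x <• a) y = star a * inner B x y := by
  rw [← star_inner y, inner_op_smul_right, star_mul, star_inner]

variable (B) in
lemma norm_sq_eq_norm_inner_self (x : E) : ‖x‖ ^ 2 = ‖inner B x x‖ := by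
  rw [norm_eq_sqrt_norm_inner_self (A := B) x, Real.sq_sqrt (norm_nonneg _)]

lemma ext_inner_left {x y : E} (h : ∀ w : E, inner B w x = inner B w y) : x = y := by
  have h0 : inner B (x - y) (x - y) = 0 := by rw [inner_sub_right, h, sub_self]
  exact sub_eq_zero.mp (inner_self.mp h0)

lemma add_op_smul (v w : E) (b : B) : (v + w) <• b = v <• b + w <• b :=
  ext_inner_left (B := B) fun _ => by simp only [inner_op_smul_right, inner_add_right, add_mul]

lemma op_smul_add (v : E) (b c : B) : v <• (b + c) = v <• b + v <• c :=
  ext_inner_left (B := B) fun _ => by simp only [inner_op_smul_right, inner_add_right, mul_add]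

lemma real_smul_op_smul (r : ℝ) (v : E) (b : B) : (r • v) <• b = r • (v <• b) :=
  ext_inner_left (B := B) fun _ => by
    simp only [inner_op_smul_right, inner_real_smul_right, smul_mul_assoc]

lemma op_smul_real_smul (r : ℝ) (v : E) (b : B) : v <• (r • b) = r • (v <• b) :=
  ext_inner_left (B := B) fun _ => by
    simp only [inner_op_smul_right, inner_real_smul_right, mul_smul_comm]

lemma norm_op_smul_le (v : E) (b : B) : ‖v <• b‖ ≤ ‖v‖ * ‖b‖ := by
  have hsq : ‖inner B (v <• b) (v <• b)‖ ≤ (‖v‖ * ‖b‖) ^ 2 :=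
    calc ‖inner B (v <• b) (v <• b)‖ = ‖star b * (inner B v v * b)‖ := by
          rw [inner_op_smul_right, inner_op_smul_left, mul_assoc]
      _ ≤ ‖star b‖ * (‖inner B v v‖ * ‖b‖) :=
          (norm_mul_le _ _).trans (by gcongr; exact norm_mul_le _ _)
      _ = (‖v‖ * ‖b‖) ^ 2 := by rw [norm_star, ← norm_sq_eq_norm_inner_self B]; ring
  calc ‖v <• b‖ = √‖inner B (v <• b) (v <• b)‖ := norm_eq_sqrt_norm_inner_self _
    _ ≤ √((‖v‖ * ‖b‖) ^ 2) := Real.sqrt_le_sqrt hsq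
    _ = ‖v‖ * ‖b‖ := Real.sqrt_sq (by positivity)

noncomputable def opSmulL : E →L[ℝ] B →L[ℝ] E :=
  LinearMap.mkContinuous₂
    (LinearMap.mk₂ ℝ (fun (v : E) (b : B) => v <• b)
      add_op_smul real_smul_op_smul op_smul_add op_smul_real_smul)
    1 fun v b => by simpa using norm_op_smul_le v b

variable [StarOrderedRing B]

lemma inner_mul_inner_swap_le (x y : E) :
    inner B y x * inner B x y ≤ ‖x‖ ^ 2 • inner B y y := by
  rcases eq_or_ne x 0 with rfl | hx
  · have h0 : inner B y (0 : E) = 0 := by rw [← sub_self (0 : E), inner_sub_right, sub_self]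
    simp [h0]
  have hx2 : 0 < ‖x‖ ^ 2 := by positivity
  have hsa : IsSelfAdjoint (inner B x x) := star_inner x x
  -- positivity of `⟪v, v⟫` for `v = x <• a - ‖x‖² • y`, then specialised to `a = ⟪x, y⟫`
  have hpos (a : B) : (0 : B) ≤ ‖x‖ ^ 2 • (star a * a) - ‖x‖ ^ 2 • (star a * inner B x y)
      - ‖x‖ ^ 2 • (inner B y x * a) + ‖x‖ ^ 2 • (‖x‖ ^ 2 • inner B y y) :=
    calc (0 : B) ≤ inner B (x <• a - ‖x‖ ^ 2 • y) (x <• a - ‖x‖ ^ 2 • y) := inner_self_nonneg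
      _ = star a * inner B x x * a - ‖x‖ ^ 2 • (star a * inner B x y)
            - ‖x‖ ^ 2 • (inner B y x * a) + ‖x‖ ^ 2 • (‖x‖ ^ 2 • inner B y y) := by
          simp only [inner_sub_right, inner_op_smul_right, inner_sub_left, inner_op_smul_left,
            inner_real_smul_left, inner_real_smul_right, sub_mul, smul_mul_assoc,
            smul_sub, mul_assoc]
          abel
      _ ≤ _ := by
          gcongr
          calc _ ≤ ‖inner B x x‖ • (star a * a) := CStarAlgebra.star_left_conjugate_le_norm_smul hsa
            _ = ‖x‖ ^ 2 • (star a * a) := by rw [norm_sq_eq_norm_inner_self B]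
  have h := hpos (inner B x y)
  simp only [star_inner, sub_self, zero_sub, le_neg_add_iff_add_le, add_zero] at h
  rwa [smul_le_smul_iff_of_pos_left hx2] at h

lemma norm_inner_le (x y : E) : ‖inner B x y‖ ≤ ‖x‖ * ‖y‖ := by
  have hsq : ‖inner B x y‖ ^ 2 ≤ (‖x‖ * ‖y‖) ^ 2 :=
    calc ‖inner B x y‖ ^ 2 = ‖inner B y x * inner B x y‖ := by
          rw [← star_inner x, CStarRing.norm_star_mul_self, pow_two]
      _ ≤ ‖‖x‖ ^ 2 • inner B y y‖ := by
          refine CStarAlgebra.norm_le_norm_of_nonneg_of_le ?_ (inner_mul_inner_swap_le x y)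
          rw [← star_inner x]
          exact star_mul_self_nonneg _
      _ = (‖x‖ * ‖y‖) ^ 2 := by
          rw [norm_smul, ← norm_sq_eq_norm_inner_self B y, mul_pow,
            Real.norm_of_nonneg (by positivity)]
  exact (pow_le_pow_iff_left₀ (norm_nonneg _) (by positivity) two_ne_zero).mp hsq

noncomputable def innerRL : E →L[ℝ] E →L[ℝ] B :=
  LinearMap.mkContinuous₂
    (LinearMap.mk₂ ℝ (fun (x y : E) => inner B x y)
      (fun _ _ _ => inner_add_left) (fun _ _ _ => inner_real_smul_left)
      (fun _ _ _ => inner_add_right) (fun _ _ _ => inner_real_smul_right))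
    1 fun x y => by simpa using norm_inner_le x y

lemma hasDerivAt_op_smul_inner {f g h : ℝ → E} {f' g' h' : E} {t : ℝ}
    (hf : HasDerivAt f f' t) (hg : HasDerivAt g g' t) (hh : HasDerivAt h h' t) :
    HasDerivAt (fun s => f s <• inner B (g s) (h s))
      (f' <• inner B (g t) (h t) + f t <• inner B g' (h t) + f t <• inner B (g t) h') t := by
  have hinner : HasDerivAt (fun s => inner B (g s) (h s))
      (inner B (g t) h' + inner B g' (h t)) t :=
    (innerRL (B := B)).hasDerivAt_of_bilinear (fun _ => hg) fun _ => hh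
  refine (opSmulL.hasDerivAt_of_bilinear (fun _ => hf) fun _ => hinner).congr_deriv ?_
  change f t <• (inner B (g t) h' + inner B g' (h t)) + f' <• inner B (g t) (h t) = _
  rw [op_smul_add]
  abel

end CStarModuleRight

lemma hasDerivAt_orbit_iff_tendsto {E : Type*} [NormedAddCommGroup E] [NormedSpace ℝ E]
    {u : ℝ → E → E} (hu0 : u 0 = id) {x l : E} :
    HasDerivAt (fun t => u t x) l 0 ↔ Tendsto (fun t : ℝ => t⁻¹ • (u t x - x)) (𝓝[≠] 0) (𝓝 l) := by
  rw [hasDerivAt_iff_tendsto_slope]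
  refine tendsto_congr fun t => ?_
  simp [slope, hu0]

theorem stmt16_general {B E : Type*}
    [NonUnitalCStarAlgebra B] [PartialOrder B] [StarOrderedRing B]
    [NormedAddCommGroup E] [NormedSpace ℂ E] [SMul Bᵐᵒᵖ E] [CStarModuleRight B E]
    (u : ℝ → E → E)
    (hu0 : u 0 = id)
    (htern : ∀ (t : ℝ) (x y z : E),
      u t (x <• (inner B y z : B)) = (u t x) <• (inner B (u t y) (u t z) : B))
    (D : Set E) (δ : E → E)
    (hD : ∀ x : E, x ∈ D ↔ ∃ l : E,
      Tendsto (fun t : ℝ => t⁻¹ • (u t x - x)) (𝓝[≠] 0) (𝓝 l))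
    (hδ : ∀ x ∈ D,
      Tendsto (fun t : ℝ => t⁻¹ • (u t x - x)) (𝓝[≠] 0) (𝓝 (δ x))) :
    ∀ x ∈ D, ∀ y ∈ D, ∀ z ∈ D,
      x <• (inner B y z : B) ∈ D ∧
      δ (x <• (inner B y z : B)) =
        δ x <• (inner B y z : B) + x <• (inner B (δ y) z : B) + x <• (inner B y (δ z) : B) := by
  intro x hx y hy z hz
  have horbit (v : E) (hv : v ∈ D) : HasDerivAt (fun t => u t v) (δ v) 0 :=
    (hasDerivAt_orbit_iff_tendsto hu0).mpr (hδ v hv)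
  have hprod := CStarModuleRight.hasDerivAt_op_smul_inner (B := B)
    (horbit x hx) (horbit y hy) (horbit z hz)
  simp only [← htern, hu0, id] at hprod
  have hmem : x <• (inner B y z : B) ∈ D :=
    (hD _).mpr ⟨_, (hasDerivAt_orbit_iff_tendsto hu0).mp hprod⟩
  exact ⟨hmem, (horbit _ hmem).unique hprod⟩

/-- The generator of a strongly continuous one-parameter group of ternary automorphisms
of a Hilbert C*-module is a ternary derivation. -/
theorem stmt16 {B E : Type*}
    [NonUnitalCStarAlgebra B] [PartialOrder B] [StarOrderedRing B]
    [NormedAddCommGroup E] [NormedSpace ℂ E] [SMul Bᵐᵒᵖ E] [CStarModuleRight B E]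
    [CompleteSpace E]
    (u : ℝ → E → E)
    (hu0 : u 0 = id)
    (hgrp : ∀ s t : ℝ, ∀ x : E, u (s + t) x = u s (u t x))
    (hbij : ∀ t : ℝ, Function.Bijective (u t))
    (htern : ∀ (t : ℝ) (x y z : E),
      u t (x <• (inner B y z : B)) = (u t x) <• (inner B (u t y) (u t z) : B))
    (hcont : ∀ x : E, Continuous fun t : ℝ => u t x)
    (D : Set E) (δ : E → E)
    (hD : ∀ x : E, x ∈ D ↔ ∃ l : E,
      Tendsto (fun t : ℝ => t⁻¹ • (u t x - x)) (𝓝[≠] 0) (𝓝 l))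
    (hδ : ∀ x ∈ D,
      Tendsto (fun t : ℝ => t⁻¹ • (u t x - x)) (𝓝[≠] 0) (𝓝 (δ x))) :
    ∀ x ∈ D, ∀ y ∈ D, ∀ z ∈ D,
      x <• (inner B y z : B) ∈ D ∧
      δ (x <• (inner B y z : B)) =
        δ x <• (inner B y z : B) + x <• (inner B (δ y) z : B) + x <• (inner B y (δ z) : B) :=
  stmt16_general u hu0 htern D δ hD hδ
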